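/- arXiv:1808.08156 — 2 statements merged into one kernel-verified Lean document; each statement's English description precedes it below -/
import Mathlib

section
/- Let (Ω, 𝒜, μ) be a finite measure space, 0 < p ≤ 1, and f ∈ L_p(Ω) supported on a set Ω' ∈ 𝒜 with μ(Ω') ≤ μ(Ω)/2. Then for every constant ξ ∈ ℝ, ‖f − ξ‖_{L_p(Ω)} ≥ ‖f‖_{L_p(Ω)}; that is, the best approximation of f by constants in the L_p quasi-norm is attained at ξ = 0. -/
/-!
By the `p`-triangle inequality `|f|^p ≤ |f - ξ|^p + |ξ|^p`, integrating over `Ω'` costs at most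
`|ξ|^p μ(Ω')` beyond `∫_{Ω'} |f - ξ|^p`. Off `Ω'` the function `f` vanishes, so `|f - ξ|^p = |ξ|^p`
there, and the complement contributes `|ξ|^p μ(Ω'ᶜ) ≥ |ξ|^p μ(Ω')`, which pays for that cost.
-/

open MeasureTheory

theorem Real.abs_rpow_le_abs_sub_rpow_add_abs_rpow (a b : ℝ) {p : ℝ} (hp0 : 0 ≤ p) (hp1 : p ≤ 1) :
    |a| ^ p ≤ |a - b| ^ p + |b| ^ p :=
  calc |a| ^ p ≤ (|a - b| + |b|) ^ p :=
        Real.rpow_le_rpow (abs_nonneg a) (sub_le_iff_le_add.1 (abs_sub_abs_le_abs_sub a b)) hp0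
    _ ≤ |a - b| ^ p + |b| ^ p :=
        NNReal.coe_le_coe.2 <|
          NNReal.rpow_add_le_add_rpow ⟨_, abs_nonneg (a - b)⟩ ⟨_, abs_nonneg b⟩ hp0 hp1

theorem ENNReal.ofReal_abs_rpow_le_ofReal_abs_sub_rpow_add (a b : ℝ) {p : ℝ} (hp0 : 0 ≤ p)
    (hp1 : p ≤ 1) :
    ENNReal.ofReal (|a| ^ p) ≤ ENNReal.ofReal (|a - b| ^ p) + ENNReal.ofReal (|b| ^ p) :=
  (ENNReal.ofReal_le_ofReal (Real.abs_rpow_le_abs_sub_rpow_add_abs_rpow a b hp0 hp1)).trans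
    ENNReal.ofReal_add_le

section

variable {Ω : Type*} [MeasurableSpace Ω] {μ : Measure Ω}

theorem MeasureTheory.measure_le_measure_compl_of_le_half [IsFiniteMeasure μ] {s : Set Ω}
    (hs : MeasurableSet s) (hμ : μ s ≤ μ Set.univ / 2) : μ s ≤ μ sᶜ := by
  have h2 : μ s + μ s ≤ μ s + μ sᶜ := by
    rw [measure_add_measure_compl hs, ← two_mul, mul_comm]
    rwa [ENNReal.le_div_iff_mul_le (by norm_num) (by norm_num)] at hμ
  exact (ENNReal.add_le_add_iff_left (measure_ne_top μ s)).mp h2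

theorem MeasureTheory.setLIntegral_compl_comp_eq_of_ae_eq {β : Type*} {f : Ω → β} {c : β}
    {s : Set Ω} (hs : MeasurableSet s) (hf : ∀ᵐ x ∂μ, x ∉ s → f x = c) (F : β → ENNReal) :
    ∫⁻ x in sᶜ, F (f x) ∂μ = F c * μ sᶜ := by
  have hfc : ∀ᵐ x ∂μ.restrict sᶜ, F (f x) = F c := by
    filter_upwards [ae_restrict_of_ae hf, ae_restrict_mem hs.compl] with x hx hxs
    rw [hx hxs]
  rw [lintegral_congr_ae hfc, setLIntegral_const]

theorem MeasureTheory.setLIntegral_ofReal_abs_rpow_le (f : Ω → ℝ) (s : Set Ω) (ξ : ℝ) {p : ℝ}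
    (hp0 : 0 ≤ p) (hp1 : p ≤ 1) :
    ∫⁻ x in s, ENNReal.ofReal (|f x| ^ p) ∂μ
      ≤ ∫⁻ x in s, ENNReal.ofReal (|f x - ξ| ^ p) ∂μ + ENNReal.ofReal (|ξ| ^ p) * μ s :=
  calc ∫⁻ x in s, ENNReal.ofReal (|f x| ^ p) ∂μ
      ≤ ∫⁻ x in s, (ENNReal.ofReal (|f x - ξ| ^ p) + ENNReal.ofReal (|ξ| ^ p)) ∂μ :=
        lintegral_mono fun x => ENNReal.ofReal_abs_rpow_le_ofReal_abs_sub_rpow_add _ _ hp0 hp1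
    _ = _ := by rw [lintegral_add_right _ measurable_const, setLIntegral_const]

end

/-- Best approximation by constants in `L_p`, `0 < p ≤ 1`: if `f` is supported on a set
`Ω'` of measure at most half the total measure, then for every constant `ξ`,
`‖f - ξ‖_{L_p} ≥ ‖f‖_{L_p}` (stated in terms of the `p`-th power integrals). -/
theorem stmt0 {Ω : Type*} [MeasurableSpace Ω] (μ : Measure Ω) [IsFiniteMeasure μ]
    (p : ℝ) (hp0 : 0 < p) (hp1 : p ≤ 1)
    (f : Ω → ℝ) (Ω' : Set Ω) (hΩ' : MeasurableSet Ω')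
    (hμ : μ Ω' ≤ μ Set.univ / 2)
    (hsupp : ∀ᵐ x ∂μ, x ∉ Ω' → f x = 0) :
    ∀ ξ : ℝ,
      (∫⁻ x, ENNReal.ofReal (|f x| ^ p) ∂μ) ≤ ∫⁻ x, ENNReal.ofReal (|f x - ξ| ^ p) ∂μ := by
  intro ξ
  have hf_compl : ∫⁻ x in Ω'ᶜ, ENNReal.ofReal (|f x| ^ p) ∂μ = 0 := by
    rw [setLIntegral_compl_comp_eq_of_ae_eq hΩ' hsupp fun y => ENNReal.ofReal (|y| ^ p)]
    simp [Real.zero_rpow hp0.ne']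
  have hfξ_compl : ∫⁻ x in Ω'ᶜ, ENNReal.ofReal (|f x - ξ| ^ p) ∂μ
      = ENNReal.ofReal (|ξ| ^ p) * μ Ω'ᶜ := by
    rw [setLIntegral_compl_comp_eq_of_ae_eq hΩ' hsupp fun y => ENNReal.ofReal (|y - ξ| ^ p)]
    simp
  calc ∫⁻ x, ENNReal.ofReal (|f x| ^ p) ∂μ
      = ∫⁻ x in Ω', ENNReal.ofReal (|f x| ^ p) ∂μ := by
        rw [← lintegral_add_compl _ hΩ', hf_compl, add_zero]
    _ ≤ ∫⁻ x in Ω', ENNReal.ofReal (|f x - ξ| ^ p) ∂μ + ENNReal.ofReal (|ξ| ^ p) * μ Ω' :=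
        setLIntegral_ofReal_abs_rpow_le f Ω' ξ hp0.le hp1
    _ ≤ ∫⁻ x in Ω', ENNReal.ofReal (|f x - ξ| ^ p) ∂μ + ENNReal.ofReal (|ξ| ^ p) * μ Ω'ᶜ :=
        add_le_add_right (mul_le_mul_right (measure_le_measure_compl_of_le_half hΩ' hμ) _) _
    _ = ∫⁻ x, ENNReal.ofReal (|f x - ξ| ^ p) ∂μ := by
        rw [← hfξ_compl, lintegral_add_compl _ hΩ']
end

section
/- Let d ≥ 1, 0 < p < 1, 0 < q < ∞, and 0 < s < d(1/p − 1). Suppose F is a linear functional on the span of characteristic functions of dyadic cubes in [0,1]^d satisfying |F(χ_Δ)| ≤ C·‖χ_Δ‖_{𝐀^s_{p,q,1}} ≤ C'·2^{k(s−d/p)} for all dyadic cubes Δ of side 2^{−k} and all k. Then F(χ_Δ) = 0 for every dyadic cube Δ. -/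
/-!
Every dyadic cube is the disjoint union of its `2^d` children, so `a(Δ) := F(χ_Δ)` is additive
under refinement. Refining `l` times gives `|F(χ_Δ)| ≤ 2^{ld} · C' · ρ^{k+l}` with
`ρ = 2^{s - d/p}`, i.e. a bound `C' ρ^k (2^d ρ)^l`; the hypothesis `s < d(1/p - 1)` says exactly
that `2^d ρ = 2^{d + s - d/p} < 1`, so letting `l → ∞` forces `F(χ_Δ) = 0`.
-/

open MeasureTheory

noncomputable section

/-- The half-open dyadic cube of side `2^{-k}` in `ℝ^d` with multi-index `i`. -/
def dyadicCube (d k : ℕ) (i : Fin d → ℕ) : Set (Fin d → ℝ) :=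
  {x | ∀ m, (i m : ℝ) / 2 ^ k ≤ x m ∧ x m < ((i m : ℝ) + 1) / 2 ^ k}

def dyadicChild {d : ℕ} (i : Fin d → ℕ) (j : Fin d → Fin 2) : Fin d → ℕ :=
  fun m => 2 * i m + j m

lemma dyadicChild_injective {d : ℕ} (i : Fin d → ℕ) : Function.Injective (dyadicChild i) := by
  intro j j' h
  funext m
  have := congrFun h m
  simp only [dyadicChild] at this
  omega

lemma dyadicChild_lt {d k : ℕ} {i : Fin d → ℕ} (hi : ∀ m, i m < 2 ^ k) (j : Fin d → Fin 2) :
    ∀ m, dyadicChild i j m < 2 ^ (k + 1) := by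
  intro m
  have := hi m
  simp only [dyadicChild, pow_succ]
  omega

lemma dyadicCube_disjoint {d k : ℕ} {i i' : Fin d → ℕ} (h : i ≠ i') :
    Disjoint (dyadicCube d k i) (dyadicCube d k i') := by
  obtain ⟨m, hm⟩ := Function.ne_iff.mp h
  refine Set.disjoint_left.mpr fun x hx hx' => hm ?_
  have h2k : (0 : ℝ) < 2 ^ k := by positivity
  have hlt : (i m : ℝ) < i' m + 1 :=
    (div_lt_div_iff_of_pos_right h2k).mp ((hx m).1.trans_lt (hx' m).2)
  have hlt' : (i' m : ℝ) < i m + 1 :=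
    (div_lt_div_iff_of_pos_right h2k).mp ((hx' m).1.trans_lt (hx m).2)
  norm_cast at hlt hlt'
  omega

lemma mem_Ico_div_two_pow_iff_exists_half (k n : ℕ) (y : ℝ) :
    y ∈ Set.Ico (n / 2 ^ k : ℝ) ((n + 1) / 2 ^ k) ↔
      ∃ b : Fin 2, y ∈ Set.Ico (((2 * n + b : ℕ) : ℝ) / 2 ^ (k + 1))
        (((2 * n + b : ℕ) + 1) / 2 ^ (k + 1)) := by
  have h2k : (0 : ℝ) < 2 ^ k := by positivity
  have h2k' : (0 : ℝ) < 2 ^ k * 2 := by positivity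
  simp only [Set.mem_Ico, pow_succ, div_le_iff₀ h2k, lt_div_iff₀ h2k, div_le_iff₀ h2k',
    lt_div_iff₀ h2k']
  constructor
  · rintro ⟨hl, hu⟩
    by_cases hy : y * (2 ^ k * 2) < 2 * n + 1
    · exact ⟨0, by push_cast [Fin.val_zero]; constructor <;> linarith⟩
    · exact ⟨1, by push_cast [Fin.val_one]; constructor <;> linarith⟩
  · rintro ⟨b, hl, hu⟩
    have hb : (b : ℝ) ≤ 1 := by exact_mod_cast Nat.lt_succ_iff.mp b.is_lt
    push_cast at hl hu
    constructor <;> nlinarith [b.val.cast_nonneg (α := ℝ)]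

lemma dyadicCube_eq_iUnion_dyadicChild (d k : ℕ) (i : Fin d → ℕ) :
    dyadicCube d k i =
      ⋃ j ∈ (Finset.univ : Finset (Fin d → Fin 2)), dyadicCube d (k + 1) (dyadicChild i j) := by
  ext x
  simp only [dyadicCube, Set.mem_ofPred_eq, Finset.mem_univ, Set.iUnion_true, Set.mem_iUnion,
    dyadicChild]
  have hcoord := fun m => mem_Ico_div_two_pow_iff_exists_half k (i m) (x m)
  simp only [Set.mem_Ico] at hcoord
  exact (forall_congr' hcoord).trans Classical.skolem

lemma indicator_dyadicCube_eq_sum (d k : ℕ) (i : Fin d → ℕ) :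
    (dyadicCube d k i).indicator (1 : (Fin d → ℝ) → ℝ) =
      ∑ j, (dyadicCube d (k + 1) (dyadicChild i j)).indicator 1 := by
  rw [dyadicCube_eq_iUnion_dyadicChild, Finset.indicator_biUnion]
  · ext x
    simp only [Finset.sum_apply]
  · intro j _ j' _ hj
    exact dyadicCube_disjoint ((dyadicChild_injective i).ne hj)

theorem eq_zero_of_sum_dyadicChild_of_abs_le {d : ℕ} (a : ℕ → (Fin d → ℕ) → ℝ) {C ρ : ℝ}
    (hρ0 : 0 ≤ ρ) (hρ : 2 ^ d * ρ < 1)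
    (ha : ∀ k i, a k i = ∑ j, a (k + 1) (dyadicChild i j))
    (hbound : ∀ k i, (∀ m, i m < 2 ^ k) → |a k i| ≤ C * ρ ^ k) :
    ∀ k i, (∀ m, i m < 2 ^ k) → a k i = 0 := by
  have hrefine : ∀ l k i, (∀ m, i m < 2 ^ k) → |a k i| ≤ C * ρ ^ k * (2 ^ d * ρ) ^ l := by
    intro l
    induction l with
    | zero => simpa using hbound
    | succ l ih =>
      intro k i hi
      calc |a k i| ≤ ∑ j, |a (k + 1) (dyadicChild i j)| := by
            rw [ha k i]; exact Finset.abs_sum_le_sum_abs _ _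
        _ ≤ ∑ _j : Fin d → Fin 2, C * ρ ^ (k + 1) * (2 ^ d * ρ) ^ l :=
            Finset.sum_le_sum fun j _ => ih (k + 1) _ (dyadicChild_lt hi j)
        _ = C * ρ ^ k * (2 ^ d * ρ) ^ (l + 1) := by
            simp only [Finset.sum_const, Finset.card_univ, Fintype.card_fun, Fintype.card_fin,
              nsmul_eq_mul]
            push_cast
            ring
  intro k i hi
  have hlim : Filter.Tendsto (fun l => C * ρ ^ k * (2 ^ d * ρ) ^ l) Filter.atTop (nhds 0) := by
    simpa using (tendsto_pow_atTop_nhds_zero_of_lt_one (by positivity) hρ).const_mul (C * ρ ^ k)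
  exact abs_nonpos_iff.mp (ge_of_tendsto' hlim fun l => hrefine l k i hi)

theorem stmt8_general (d : ℕ) (p s : ℝ) (hs : s < d * (1 / p - 1))
    (F : ((Fin d → ℝ) → ℝ) →ₗ[ℝ] ℝ) (C' : ℝ)
    (hF : ∀ (k : ℕ) (i : Fin d → ℕ), (∀ m, i m < 2 ^ k) →
      |F ((dyadicCube d k i).indicator 1)| ≤ C' * (2:ℝ) ^ ((k : ℝ) * (s - d / p))) :
    ∀ (k : ℕ) (i : Fin d → ℕ), (∀ m, i m < 2 ^ k) →
      F ((dyadicCube d k i).indicator 1) = 0 := by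
  have hρ : (2 : ℝ) ^ d * 2 ^ (s - d / p) < 1 := by
    rw [← Real.rpow_natCast, ← Real.rpow_add two_pos]
    refine Real.rpow_lt_one_of_one_lt_of_neg one_lt_two ?_
    rw [mul_sub, mul_one_div] at hs
    linarith
  refine eq_zero_of_sum_dyadicChild_of_abs_le _ (C := C') (by positivity) hρ
    (fun k i => by rw [indicator_dyadicCube_eq_sum, map_sum]) fun k i hi => ?_
  rw [← Real.rpow_natCast, ← Real.rpow_mul zero_le_two, mul_comm _ (k : ℝ)]
  exact hF k i hi

/-- Triviality of the dual in the range `0 < s < d(1/p-1)`: a linear functional `F` on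
functions on `ℝ^d` which satisfies `|F(χ_Δ)| ≤ C'·2^{k(s-d/p)}` for all dyadic cubes `Δ`
of side `2^{-k}` in `[0,1]^d` must vanish on all such characteristic functions. -/
theorem stmt8 (d : ℕ) (hd : 1 ≤ d) (p q s : ℝ) (hp0 : 0 < p) (hp1 : p < 1)
    (hq0 : 0 < q) (hs0 : 0 < s) (hs : s < d * (1 / p - 1))
    (F : ((Fin d → ℝ) → ℝ) →ₗ[ℝ] ℝ) (C' : ℝ)
    (hF : ∀ (k : ℕ) (i : Fin d → ℕ), (∀ m, i m < 2 ^ k) →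
      |F ((dyadicCube d k i).indicator 1)| ≤ C' * (2:ℝ) ^ ((k : ℝ) * (s - d / p))) :
    ∀ (k : ℕ) (i : Fin d → ℕ), (∀ m, i m < 2 ^ k) →
      F ((dyadicCube d k i).indicator 1) = 0 :=
  stmt8_general d p s hs F C' hF
end
end
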